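/- There is a universal constant C > 0 such that the following holds. Let f : (ℝ^n)^k → ℝ be a k-linear form with ‖f‖_∞ ≤ 1 whose coefficients all satisfy f̂_{i_1,…,i_k} = ±α for some fixed α ≥ 0. Then for every j ∈ {1,…,k} and ℓ ∈ {1,…,n}, Var(f)² ≤ C · k³ · I_{(j,ℓ)}(f). -/

import Mathlib

/-!
All coefficients have modulus `α`, so `Var(f) = nᵏ α²` and `I_{(j,ℓ)}(f) = nᵏ⁻¹ α²`, and the claim
amounts to `nᵏ⁺¹ α² ≤ C k³`. This follows from the Bohnenblust–Hille inequality
`∑ |f̂_i|^(2k/(k+1)) ≤ (√3 ^ t ‖f‖_∞)^(2k/(k+1))` for `k ≤ 2ᵗ`, whose constant is polynomial in `k`.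
It is proved by induction on `t`: split the `k` blocks of variables into two halves of size at
most `2ᵗ⁻¹`; Blei's inequality bounds the left-hand side by two mixed `ℓᵖ(ℓ²)` norms of the
coefficient matrix; in each of them the inner `ℓ²` norm is a Rademacher chaos norm, which the
Khintchine inequality (obtained by interpolating between the second and the fourth moment, the
latter controlled by induction on the degree) bounds by an `Lᵖ` norm, and then the induction
hypothesis applies to the half-forms.
-/

open Finset
open scoped BigOperators

namespace BohnenblustHille

lemma expect_bool (g : Bool → ℝ) : 𝔼 b, g b = (g true + g false) / 2 := by
  rw [Fintype.expect_eq_sum_div_card, Fintype.sum_bool, Fintype.card_bool, Nat.cast_ofNat]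

lemma expect_pi_fin_succ {α : Type*} [Fintype α] {n : ℕ} (g : (Fin (n + 1) → α) → ℝ) :
    𝔼 y, g y = 𝔼 a, 𝔼 y, g (Fin.cons a y) := by
  rw [← Finset.expect_product', Finset.univ_product_univ]
  exact (Fintype.expect_equiv (Fin.consEquiv fun _ => α) _ _ fun _ => rfl).symm

lemma sum_pi_fin_succ {α : Type*} [Fintype α] {n : ℕ} (g : (Fin (n + 1) → α) → ℝ) :
    ∑ y, g y = ∑ a, ∑ y, g (Fin.cons a y) := by
  rw [← Fintype.sum_prod_type']
  exact (Fintype.sum_equiv (Fin.consEquiv fun _ => α) _ _ fun _ => rfl).symm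

lemma sum_pi_fin_add {α : Type*} [Fintype α] {a b : ℕ} (g : (Fin (a + b) → α) → ℝ) :
    ∑ y, g y = ∑ u, ∑ v, g (Fin.append u v) := by
  rw [← Fintype.sum_prod_type']
  exact (Fintype.sum_equiv (Fin.appendEquiv a b) _ _ fun _ => rfl).symm

lemma expect_sq_sum_le_sq_sum_sqrt {α X : Type*} [Fintype X] (s : Finset α) (g : α → X → ℝ) :
    𝔼 x, (∑ a ∈ s, g a x) ^ 2 ≤ (∑ a ∈ s, √(𝔼 x, g a x ^ 2)) ^ 2 := by
  simp only [sq, Finset.sum_mul_sum, Finset.expect_sum_comm]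
  gcongr with a _ b _
  rw [← Real.sqrt_mul (Finset.expect_nonneg fun _ _ => mul_self_nonneg _)]
  refine (le_abs_self _).trans (Real.abs_le_sqrt ?_)
  simpa only [sq] using Finset.expect_mul_sq_le_sq_mul_sq univ (g a) (g b)

section Holder

variable {α : Type*} (s : Finset α) {f g h : α → ℝ}

lemma sum_rpow_mul_rpow_le (hf : ∀ a ∈ s, 0 ≤ f a) (hg : ∀ a ∈ s, 0 ≤ g a) {θ : ℝ}
    (hθ₀ : 0 < θ) (hθ₁ : θ < 1) :
    ∑ a ∈ s, f a ^ θ * g a ^ (1 - θ) ≤ (∑ a ∈ s, f a) ^ θ * (∑ a ∈ s, g a) ^ (1 - θ) := by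
  have := Real.inner_le_Lp_mul_Lq_of_nonneg s (Real.HolderConjugate.inv_one_sub_inv hθ₀ hθ₁)
    (f := fun a => f a ^ θ) (g := fun a => g a ^ (1 - θ))
    (fun a ha => Real.rpow_nonneg (hf a ha) _) (fun a ha => Real.rpow_nonneg (hg a ha) _)
  simp only [one_div, inv_inv] at this
  convert this using 3 <;> refine Finset.sum_congr rfl fun a ha => ?_
  · rw [Real.rpow_rpow_inv (hf a ha) hθ₀.ne']
  · rw [Real.rpow_rpow_inv (hg a ha) (by linarith)]

lemma sum_rpow_mul_rpow_mul_rpow_le (hf : ∀ a ∈ s, 0 ≤ f a) (hg : ∀ a ∈ s, 0 ≤ g a)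
    (hh : ∀ a ∈ s, 0 ≤ h a) {θ₁ θ₂ θ₃ : ℝ} (h₁ : 0 < θ₁) (h₂ : 0 < θ₂) (h₃ : 0 < θ₃)
    (hθ : θ₁ + θ₂ + θ₃ = 1) :
    ∑ a ∈ s, f a ^ θ₁ * g a ^ θ₂ * h a ^ θ₃ ≤
      (∑ a ∈ s, f a) ^ θ₁ * (∑ a ∈ s, g a) ^ θ₂ * (∑ a ∈ s, h a) ^ θ₃ := by
  set φ := θ₂ / (θ₂ + θ₃)
  have hφ₀ : 0 < φ := by positivity
  have hφ₁ : φ < 1 := (div_lt_one (by positivity)).2 (by linarith)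
  have e₂ : (1 - θ₁) * φ = θ₂ := by
    rw [show 1 - θ₁ = θ₂ + θ₃ by linarith, mul_div_cancel₀ _ (by positivity)]
  have e₃ : (1 - θ₁) * (1 - φ) = θ₃ := by rw [mul_one_sub, e₂]; linarith
  have split {x y : ℝ} (hx : 0 ≤ x) (hy : 0 ≤ y) :
      x ^ θ₂ * y ^ θ₃ = (x ^ φ * y ^ (1 - φ)) ^ (1 - θ₁) := by
    rw [Real.mul_rpow (by positivity) (by positivity), ← Real.rpow_mul hx, ← Real.rpow_mul hy,
      mul_comm φ, mul_comm (1 - φ), e₂, e₃]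
  calc ∑ a ∈ s, f a ^ θ₁ * g a ^ θ₂ * h a ^ θ₃
      = ∑ a ∈ s, f a ^ θ₁ * (g a ^ φ * h a ^ (1 - φ)) ^ (1 - θ₁) :=
        Finset.sum_congr rfl fun a ha => by rw [mul_assoc, split (hg a ha) (hh a ha)]
    _ ≤ (∑ a ∈ s, f a) ^ θ₁ * (∑ a ∈ s, g a ^ φ * h a ^ (1 - φ)) ^ (1 - θ₁) :=
        sum_rpow_mul_rpow_le s hf (fun a ha => by have := hg a ha; have := hh a ha; positivity)
          h₁ (by linarith)
    _ ≤ (∑ a ∈ s, f a) ^ θ₁ * ((∑ a ∈ s, g a) ^ φ * (∑ a ∈ s, h a) ^ (1 - φ)) ^ (1 - θ₁) := by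
        have := Finset.sum_nonneg hf
        gcongr
        · exact Finset.sum_nonneg fun a ha => by
            have := hg a ha; have := hh a ha; positivity
        · linarith
        · exact sum_rpow_mul_rpow_le s hg hh hφ₀ hφ₁
    _ = _ := by
        rw [← split (Finset.sum_nonneg hg) (Finset.sum_nonneg hh), mul_assoc]

end Holder

lemma expect_rpow_mul_rpow_le {X : Type*} [Fintype X] {f g : X → ℝ} (hf : ∀ x, 0 ≤ f x)
    (hg : ∀ x, 0 ≤ g x) {θ : ℝ} (hθ₀ : 0 < θ) (hθ₁ : θ < 1) :
    𝔼 x, f x ^ θ * g x ^ (1 - θ) ≤ (𝔼 x, f x) ^ θ * (𝔼 x, g x) ^ (1 - θ) := by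
  have hN : (0 : ℝ) ≤ #(univ : Finset X) := Nat.cast_nonneg _
  simp only [Finset.expect_eq_sum_div_card]
  rw [Real.div_rpow (Finset.sum_nonneg fun x _ => hf x) hN,
    Real.div_rpow (Finset.sum_nonneg fun x _ => hg x) hN, div_mul_div_comm,
    ← Real.rpow_add' hN (by norm_num), add_sub_cancel, Real.rpow_one]
  gcongr
  exact sum_rpow_mul_rpow_le _ (fun x _ => hf x) (fun x _ => hg x) hθ₀ hθ₁

lemma expect_sq_le_rpow_mul_rpow {X : Type*} [Fintype X] (F : X → ℝ) {p : ℝ} (hp₂ : p < 2) :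
    𝔼 x, F x ^ 2 ≤
      (𝔼 x, |F x| ^ p) ^ (2 / (4 - p)) * (𝔼 x, F x ^ 4) ^ (1 - 2 / (4 - p)) := by
  have hpt (x : X) : F x ^ 2 = (|F x| ^ p) ^ (2 / (4 - p)) * (F x ^ 4) ^ (1 - 2 / (4 - p)) := by
    have he : p * (2 / (4 - p)) + 4 * (1 - 2 / (4 - p)) = 2 := by
      field_simp [show 4 - p ≠ 0 by linarith]; ring
    rw [← sq_abs, show F x ^ 4 = |F x| ^ 4 by rw [pow_abs, abs_of_nonneg (by positivity)],
      ← Real.rpow_ofNat |F x| 4, ← Real.rpow_mul (abs_nonneg _),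
      ← Real.rpow_mul (abs_nonneg _), ← Real.rpow_add' (abs_nonneg _) (by rw [he]; norm_num), he,
      Real.rpow_two]
  simp only [hpt]
  exact expect_rpow_mul_rpow_le (fun x => by positivity) (fun x => by positivity)
    (div_pos two_pos (by linarith)) ((div_lt_one (by linarith)).2 (by linarith))

lemma rpow_expect_sq_le {X : Type*} [Fintype X] (F : X → ℝ) {K p : ℝ} (hK : 0 ≤ K)
    (hp₀ : 0 < p) (hp₂ : p < 2) (h4 : 𝔼 x, F x ^ 4 ≤ K * (𝔼 x, F x ^ 2) ^ 2) :
    (𝔼 x, F x ^ 2) ^ (p / 2) ≤ K ^ ((2 - p) / 2) * 𝔼 x, |F x| ^ p := by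
  have hHolder := expect_sq_le_rpow_mul_rpow F hp₂
  set S := 𝔼 x, F x ^ 2
  set M := 𝔼 x, |F x| ^ p
  have hM : 0 ≤ M := Finset.expect_nonneg fun x _ => by positivity
  obtain hS | hS : 0 = S ∨ 0 < S :=
    (Finset.expect_nonneg fun x _ => sq_nonneg (F x) : 0 ≤ S).eq_or_lt
  · rw [← hS, Real.zero_rpow (by positivity)]
    positivity
  obtain ⟨θ, hθ⟩ : ∃ θ : ℝ, θ = 2 / (4 - p) := ⟨_, rfl⟩
  rw [← hθ] at hHolder
  have h4p : 4 - p ≠ 0 := by linarith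
  have hθ₀ : 0 < θ := hθ ▸ div_pos two_pos (by linarith)
  have hθ₁ : θ < 1 := hθ ▸ (div_lt_one (by linarith)).2 (by linarith)
  have e₁ : (1 - θ) * θ⁻¹ = (2 - p) / 2 := by rw [hθ]; field_simp; ring
  have e₂ : 2 * (1 - θ) * θ⁻¹ = 2 - p := by rw [mul_assoc, e₁]; ring
  refine le_of_mul_le_mul_right ?_ (Real.rpow_pos_of_pos hS (2 - p))
  calc S ^ (p / 2) * S ^ (2 - p) = S ^ θ⁻¹ := by
        rw [← Real.rpow_add hS, hθ, inv_div]; ring_nf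
    _ ≤ (M ^ θ * (K * S ^ 2) ^ (1 - θ)) ^ θ⁻¹ := by
        gcongr
        exact hHolder.trans (by gcongr)
    _ = K ^ ((2 - p) / 2) * M * S ^ (2 - p) := by
        rw [Real.mul_rpow hK (sq_nonneg S), ← Real.rpow_two, ← Real.rpow_mul hS.le,
          Real.mul_rpow (by positivity) (by positivity),
          Real.mul_rpow (by positivity) (by positivity), ← Real.rpow_mul hM,
          ← Real.rpow_mul hK, ← Real.rpow_mul hS.le, mul_inv_cancel₀ hθ₀.ne', Real.rpow_one,
          e₁, e₂]
        ring

def spin (b : Bool) : ℝ := if b then 1 else -1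

def rademacherSum {n : ℕ} (a : Fin n → ℝ) (y : Fin n → Bool) : ℝ := ∑ ℓ, a ℓ * spin (y ℓ)

lemma rademacherSum_cons {n : ℕ} (a : Fin (n + 1) → ℝ) (b : Bool) (y : Fin n → Bool) :
    rademacherSum a (Fin.cons b y) = a 0 * spin b + rademacherSum (Fin.tail a) y := by
  simp [rademacherSum, Fin.sum_univ_succ, Fin.tail]

lemma expect_rademacherSum_sq {n : ℕ} (a : Fin n → ℝ) :
    𝔼 y, rademacherSum a y ^ 2 = ∑ ℓ, a ℓ ^ 2 := by
  induction n with
  | zero => simp [rademacherSum]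
  | succ n ih =>
    have h (y : Fin n → Bool) : 𝔼 b, rademacherSum a (Fin.cons b y) ^ 2 =
        a 0 ^ 2 + rademacherSum (Fin.tail a) y ^ 2 := by
      rw [expect_bool]
      simp only [rademacherSum_cons, spin, if_true, Bool.false_eq_true, if_false]
      ring
    rw [expect_pi_fin_succ, Finset.expect_comm, Finset.expect_congr rfl fun y _ => h y,
      Finset.expect_add_distrib, Fintype.expect_const, ih, Fin.sum_univ_succ]
    rfl

lemma expect_rademacherSum_pow_four_le {n : ℕ} (a : Fin n → ℝ) :
    𝔼 y, rademacherSum a y ^ 4 ≤ 3 * (∑ ℓ, a ℓ ^ 2) ^ 2 := by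
  induction n with
  | zero => simp [rademacherSum]
  | succ n ih =>
    set T := rademacherSum (Fin.tail a)
    have h (y : Fin n → Bool) : 𝔼 b, rademacherSum a (Fin.cons b y) ^ 4 =
        a 0 ^ 4 + 6 * a 0 ^ 2 * T y ^ 2 + T y ^ 4 := by
      rw [expect_bool]
      simp only [rademacherSum_cons, spin, if_true, Bool.false_eq_true, if_false, T]
      ring
    rw [expect_pi_fin_succ, Finset.expect_comm, Finset.expect_congr rfl fun y _ => h y,
      Finset.expect_add_distrib, Finset.expect_add_distrib, Fintype.expect_const,
      ← Finset.mul_expect, expect_rademacherSum_sq, Fin.sum_univ_succ]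
    change _ ≤ 3 * (a 0 ^ 2 + ∑ ℓ, Fin.tail a ℓ ^ 2) ^ 2
    have : 0 ≤ ∑ ℓ, Fin.tail a ℓ ^ 2 := by positivity
    nlinarith [ih (Fin.tail a), sq_nonneg (a 0)]

variable {n : ℕ}

def multilinearForm {d : ℕ} (c : (Fin d → Fin n) → ℝ) (x : Fin d → Fin n → Bool) : ℝ :=
  ∑ i, c i * ∏ j, spin (x j (i j))

lemma multilinearForm_cons {d : ℕ} (c : (Fin (d + 1) → Fin n) → ℝ) (y : Fin n → Bool)
    (x : Fin d → Fin n → Bool) :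
    multilinearForm c (Fin.cons y x) =
      rademacherSum (fun ℓ => multilinearForm (fun u => c (Fin.cons ℓ u)) x) y := by
  simp only [multilinearForm, rademacherSum, sum_pi_fin_succ, Fin.prod_univ_succ, Fin.cons_zero,
    Fin.cons_succ, Finset.sum_mul]
  exact Finset.sum_congr rfl fun ℓ _ => Finset.sum_congr rfl fun u _ => by ring

lemma multilinearForm_append {a b : ℕ} (c : (Fin (a + b) → Fin n) → ℝ) (x₁ : Fin a → Fin n → Bool)
    (x₂ : Fin b → Fin n → Bool) :
    multilinearForm c (Fin.append x₁ x₂) =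
      multilinearForm (fun u => multilinearForm (fun v => c (Fin.append u v)) x₂) x₁ := by
  simp only [multilinearForm, sum_pi_fin_add, Fin.prod_univ_add, Fin.append_left, Fin.append_right,
    Finset.sum_mul]
  exact Finset.sum_congr rfl fun u _ => Finset.sum_congr rfl fun v _ => by ring

lemma multilinearForm_append' {a b : ℕ} (c : (Fin (a + b) → Fin n) → ℝ)
    (x₁ : Fin a → Fin n → Bool) (x₂ : Fin b → Fin n → Bool) :
    multilinearForm c (Fin.append x₁ x₂) =
      multilinearForm (fun v => multilinearForm (fun u => c (Fin.append u v)) x₁) x₂ := by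
  rw [multilinearForm_append]
  simp only [multilinearForm, Finset.sum_mul]
  rw [Finset.sum_comm]
  exact Finset.sum_congr rfl fun v _ => Finset.sum_congr rfl fun u _ => by ring

lemma expect_multilinearForm_sq {d : ℕ} (c : (Fin d → Fin n) → ℝ) :
    𝔼 x, multilinearForm c x ^ 2 = ∑ i, c i ^ 2 := by
  induction d with
  | zero => simp [multilinearForm]
  | succ d ih =>
    rw [expect_pi_fin_succ, Finset.expect_comm, sum_pi_fin_succ]
    simp_rw [multilinearForm_cons, expect_rademacherSum_sq]
    rw [Finset.expect_sum_comm]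
    simp_rw [ih]

lemma expect_multilinearForm_pow_four_le {d : ℕ} (c : (Fin d → Fin n) → ℝ) :
    𝔼 x, multilinearForm c x ^ 4 ≤ 3 ^ d * (∑ i, c i ^ 2) ^ 2 := by
  induction d with
  | zero => simp [multilinearForm, ← pow_mul]
  | succ d ih =>
    set A : Fin n → (Fin d → Fin n → Bool) → ℝ :=
      fun ℓ => multilinearForm fun u => c (Fin.cons ℓ u)
    set S : Fin n → ℝ := fun ℓ => ∑ u, c (Fin.cons ℓ u) ^ 2
    have hA (ℓ : Fin n) : √(𝔼 x, (A ℓ x ^ 2) ^ 2) ≤ √(3 ^ d) * S ℓ := by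
      rw [← Real.sqrt_sq (by positivity : 0 ≤ S ℓ), ← Real.sqrt_mul (by positivity)]
      gcongr
      simpa only [← pow_mul] using ih fun u => c (Fin.cons ℓ u)
    calc 𝔼 x, multilinearForm c x ^ 4
        = 𝔼 x, 𝔼 y, rademacherSum (fun ℓ => A ℓ x) y ^ 4 := by
          rw [expect_pi_fin_succ, Finset.expect_comm]
          simp_rw [multilinearForm_cons]
          rfl
      _ ≤ 𝔼 x, 3 * (∑ ℓ, A ℓ x ^ 2) ^ 2 :=
          Finset.expect_le_expect fun x _ => expect_rademacherSum_pow_four_le _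
      _ ≤ 3 * (∑ ℓ, √(𝔼 x, (A ℓ x ^ 2) ^ 2)) ^ 2 := by
          rw [← Finset.mul_expect]
          gcongr
          exact expect_sq_sum_le_sq_sum_sqrt _ _
      _ ≤ 3 * (∑ ℓ, √(3 ^ d) * S ℓ) ^ 2 := by gcongr with ℓ; exact hA ℓ
      _ = 3 ^ (d + 1) * (∑ i, c i ^ 2) ^ 2 := by
          rw [← Finset.mul_sum, mul_pow, Real.sq_sqrt (by positivity), sum_pi_fin_succ]
          ring

lemma rpow_sum_sq_le_expect_abs_rpow {d : ℕ} (c : (Fin d → Fin n) → ℝ) {p : ℝ} (hp₀ : 0 < p)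
    (hp₂ : p < 2) :
    (∑ i, c i ^ 2) ^ (p / 2) ≤ ((3 : ℝ) ^ d) ^ ((2 - p) / 2) * 𝔼 x, |multilinearForm c x| ^ p := by
  rw [← expect_multilinearForm_sq]
  refine rpow_expect_sq_le _ (by positivity) hp₀ hp₂ ?_
  rw [expect_multilinearForm_sq]
  exact expect_multilinearForm_pow_four_le c

lemma sum_rpow_sum_sq_le {α : Type*} [Fintype α] {d : ℕ} (C : α → (Fin d → Fin n) → ℝ) {p B : ℝ}
    (hp₀ : 0 < p) (hp₂ : p < 2) (hB : ∀ x, ∑ u, |multilinearForm (C u) x| ^ p ≤ B) :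
    ∑ u, (∑ v, C u v ^ 2) ^ (p / 2) ≤ ((3 : ℝ) ^ d) ^ ((2 - p) / 2) * B :=
  calc ∑ u, (∑ v, C u v ^ 2) ^ (p / 2)
      ≤ ∑ u, ((3 : ℝ) ^ d) ^ ((2 - p) / 2) * 𝔼 x, |multilinearForm (C u) x| ^ p :=
        Finset.sum_le_sum fun u _ => rpow_sum_sq_le_expect_abs_rpow (C u) hp₀ hp₂
    _ = ((3 : ℝ) ^ d) ^ ((2 - p) / 2) * 𝔼 x, ∑ u, |multilinearForm (C u) x| ^ p := by
        rw [← Finset.mul_sum, Finset.expect_sum_comm]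
    _ ≤ ((3 : ℝ) ^ d) ^ ((2 - p) / 2) * B := by
        gcongr
        exact Finset.expect_le univ_nonempty fun x _ => hB x

noncomputable def bhExponent (m : ℝ) : ℝ := 2 * m / (m + 1)

lemma bhExponent_pos {m : ℝ} (hm : 0 < m) : 0 < bhExponent m := by
  unfold bhExponent; positivity

lemma bhExponent_lt_two {m : ℝ} (hm : 0 < m) : bhExponent m < 2 := by
  unfold bhExponent; rw [div_lt_iff₀ (by positivity)]; linarith

/-- The pointwise factorisation behind Blei's inequality: the weights `b`, `a`, `1` (over
`a + b + 1`) make the powers of `P` and `Q` cancel. -/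
lemma abs_rpow_bhExponent_add_eq {a b x P Q : ℝ} (ha : 0 < a) (hb : 0 < b) (hP : x ^ 2 ≤ P)
    (hQ : x ^ 2 ≤ Q) :
    |x| ^ bhExponent (a + b) =
      (x ^ 2 * P ^ (bhExponent b / 2 - 1)) ^ (b / (a + b + 1)) *
        (x ^ 2 * Q ^ (bhExponent a / 2 - 1)) ^ (a / (a + b + 1)) *
        (Q ^ (bhExponent a / 2) * P ^ (bhExponent b / 2)) ^ (1 / (a + b + 1)) := by
  rcases eq_or_ne x 0 with rfl | hx
  · rw [abs_zero, Real.zero_rpow (bhExponent_pos (by positivity)).ne', zero_pow two_ne_zero,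
      zero_mul, Real.zero_rpow (by positivity), zero_mul, zero_mul]
  have hc : 0 < x ^ 2 := by positivity
  have hP' : 0 < P := hc.trans_le hP
  have hQ' : 0 < Q := hc.trans_le hQ
  rw [Real.mul_rpow hc.le (by positivity), Real.mul_rpow hc.le (by positivity),
    Real.mul_rpow (by positivity) (by positivity), ← Real.rpow_mul hP'.le,
    ← Real.rpow_mul hP'.le, ← Real.rpow_mul hQ'.le, ← Real.rpow_mul hQ'.le]
  have eP : (bhExponent b / 2 - 1) * (b / (a + b + 1)) + bhExponent b / 2 * (1 / (a + b + 1)) =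
      0 := by
    unfold bhExponent; field_simp; ring
  have eQ : (bhExponent a / 2 - 1) * (a / (a + b + 1)) + bhExponent a / 2 * (1 / (a + b + 1)) =
      0 := by
    unfold bhExponent; field_simp; ring
  have ex : bhExponent (a + b) = 2 * (b / (a + b + 1) + a / (a + b + 1)) := by
    unfold bhExponent; field_simp; ring
  calc |x| ^ bhExponent (a + b)
      = (x ^ 2) ^ (b / (a + b + 1) + a / (a + b + 1)) *
          P ^ ((bhExponent b / 2 - 1) * (b / (a + b + 1)) + bhExponent b / 2 * (1 / (a + b + 1))) *
          Q ^ ((bhExponent a / 2 - 1) * (a / (a + b + 1)) + bhExponent a / 2 * (1 / (a + b + 1))) := by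
        rw [eP, eQ, Real.rpow_zero, Real.rpow_zero, mul_one, mul_one, ← sq_abs, ← Real.rpow_two,
          ← Real.rpow_mul (abs_nonneg _), ex]
    _ = _ := by rw [Real.rpow_add hc, Real.rpow_add hP', Real.rpow_add hQ']; ring

lemma sum_sum_sq_mul_rpow {α β : Type*} [Fintype α] [Fintype β] (C : α → β → ℝ) {q : ℝ}
    (hq : q ≠ 0) :
    ∑ u, ∑ v, C u v ^ 2 * (∑ v', C u v' ^ 2) ^ (q - 1) = ∑ u, (∑ v, C u v ^ 2) ^ q := by
  refine Finset.sum_congr rfl fun u _ => ?_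
  rw [← Finset.sum_mul, ← Real.rpow_one_add' (by positivity) (by rwa [add_sub_cancel]),
    add_sub_cancel]

/-- Blei's inequality. -/
lemma sum_sum_abs_rpow_bhExponent_le {α β : Type*} [Fintype α] [Fintype β] (C : α → β → ℝ)
    {a b : ℝ} (ha : 0 < a) (hb : 0 < b) :
    ∑ u, ∑ v, |C u v| ^ bhExponent (a + b) ≤
      (∑ u, (∑ v, C u v ^ 2) ^ (bhExponent a / 2)) ^ ((a + 1) / (a + b + 1)) *
        (∑ v, (∑ u, C u v ^ 2) ^ (bhExponent b / 2)) ^ ((b + 1) / (a + b + 1)) := by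
  set W₁ := ∑ u, (∑ v, C u v ^ 2) ^ (bhExponent a / 2)
  set W₂ := ∑ v, (∑ u, C u v ^ 2) ^ (bhExponent b / 2)
  have hW₁ : 0 ≤ W₁ := by positivity
  have hW₂ : 0 ≤ W₂ := by positivity
  have hpa : bhExponent a / 2 ≠ 0 := (half_pos (bhExponent_pos ha)).ne'
  have hpb : bhExponent b / 2 ≠ 0 := (half_pos (bhExponent_pos hb)).ne'
  calc ∑ u, ∑ v, |C u v| ^ bhExponent (a + b)
      = ∑ w : α × β,
          (C w.1 w.2 ^ 2 * (∑ u, C u w.2 ^ 2) ^ (bhExponent b / 2 - 1)) ^ (b / (a + b + 1)) *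
          (C w.1 w.2 ^ 2 * (∑ v, C w.1 v ^ 2) ^ (bhExponent a / 2 - 1)) ^ (a / (a + b + 1)) *
          ((∑ v, C w.1 v ^ 2) ^ (bhExponent a / 2) * (∑ u, C u w.2 ^ 2) ^ (bhExponent b / 2)) ^
            (1 / (a + b + 1)) := by
        rw [← Fintype.sum_prod_type']
        refine Finset.sum_congr rfl fun w _ => abs_rpow_bhExponent_add_eq ha hb ?_ ?_
        · exact Finset.single_le_sum (f := fun u => C u w.2 ^ 2) (fun _ _ => sq_nonneg _)
            (mem_univ w.1)
        · exact Finset.single_le_sum (f := fun v => C w.1 v ^ 2) (fun _ _ => sq_nonneg _)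
            (mem_univ w.2)
    _ ≤ W₂ ^ (b / (a + b + 1)) * W₁ ^ (a / (a + b + 1)) * (W₁ * W₂) ^ (1 / (a + b + 1)) := by
        refine (sum_rpow_mul_rpow_mul_rpow_le _ (fun w _ => by positivity)
          (fun w _ => by positivity) (fun w _ => by positivity) (by positivity) (by positivity)
          (by positivity) (by field_simp; ring)).trans_eq ?_
        rw [Fintype.sum_prod_type_right, Fintype.sum_prod_type, Fintype.sum_prod_type,
          sum_sum_sq_mul_rpow (fun v u => C u v) hpb, sum_sum_sq_mul_rpow C hpa,
          Finset.sum_mul_sum]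
    _ = W₁ ^ ((a + 1) / (a + b + 1)) * W₂ ^ ((b + 1) / (a + b + 1)) := by
        rw [Real.mul_rpow hW₁ hW₂, show (a + 1) / (a + b + 1) = a / (a + b + 1) + 1 / (a + b + 1)
          by ring, show (b + 1) / (a + b + 1) = b / (a + b + 1) + 1 / (a + b + 1) by ring,
          Real.rpow_add' hW₁ (by positivity), Real.rpow_add' hW₂ (by positivity)]
        ring

def IsBHConstant (n m : ℕ) (K : ℝ) : Prop :=
  ∀ (c : (Fin m → Fin n) → ℝ) (s : ℝ), (∀ x, |multilinearForm c x| ≤ s) →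
    ∑ i, |c i| ^ bhExponent m ≤ (K * s) ^ bhExponent m

lemma isBHConstant_one : IsBHConstant n 1 1 := by
  intro c s hs
  rw [show bhExponent ((1 : ℕ) : ℝ) = 1 by norm_num [bhExponent], Real.rpow_one, one_mul]
  let x : Fin 1 → Fin n → Bool := fun _ ℓ => decide (0 ≤ c fun _ => ℓ)
  refine le_of_eq_of_le (Finset.sum_congr rfl fun i _ => ?_) ((le_abs_self _).trans (hs x))
  have hi : (fun _ => i 0) = i := funext fun j => by rw [Fin.fin_one_eq_zero j]
  simp only [Fin.prod_univ_one, spin, x, hi]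
  rcases le_or_gt 0 (c i) with h | h
  · simp [h, abs_of_nonneg h]
  · simp [h.not_ge, abs_of_neg h]

lemma nonneg_of_abs_multilinearForm_le {m : ℕ} {c : (Fin m → Fin n) → ℝ} {s : ℝ}
    (hs : ∀ x, |multilinearForm c x| ≤ s) : 0 ≤ s :=
  (abs_nonneg _).trans (hs fun _ _ => true)

lemma IsBHConstant.mono {m : ℕ} {K K' : ℝ} (h : IsBHConstant n m K) (hK : 0 ≤ K) (hKK' : K ≤ K') :
    IsBHConstant n m K' := fun c s hs =>
  (h c s hs).trans <| by
    have := nonneg_of_abs_multilinearForm_le hs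
    have : 0 ≤ bhExponent m := by unfold bhExponent; positivity
    gcongr

lemma rpow_bhExponent_combine {a b X : ℝ} (ha : 0 < a) (hb : 0 < b) (hX : 0 ≤ X) :
    (((3 : ℝ) ^ b) ^ ((2 - bhExponent a) / 2) * X ^ bhExponent a) ^ ((a + 1) / (a + b + 1)) *
      (((3 : ℝ) ^ a) ^ ((2 - bhExponent b) / 2) * X ^ bhExponent b) ^ ((b + 1) / (a + b + 1)) =
      (√3 * X) ^ bhExponent (a + b) := by
  have h3 : (0 : ℝ) ≤ 3 := by norm_num
  rw [Real.mul_rpow (by positivity) (by positivity), Real.mul_rpow (by positivity) (by positivity),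
    Real.mul_rpow (by positivity) hX, Real.sqrt_eq_rpow, ← Real.rpow_mul h3, ← Real.rpow_mul h3,
    ← Real.rpow_mul h3, ← Real.rpow_mul h3, ← Real.rpow_mul h3, ← Real.rpow_mul hX,
    ← Real.rpow_mul hX]
  calc _ = (3 : ℝ) ^ (b * ((2 - bhExponent a) / 2) * ((a + 1) / (a + b + 1))) *
        3 ^ (a * ((2 - bhExponent b) / 2) * ((b + 1) / (a + b + 1))) *
        (X ^ (bhExponent a * ((a + 1) / (a + b + 1))) *
          X ^ (bhExponent b * ((b + 1) / (a + b + 1)))) := by ring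
    _ = _ := by
      rw [← Real.rpow_add (by norm_num), ← Real.rpow_add' hX (by
        unfold bhExponent; field_simp; positivity)]
      congr 2 <;> unfold bhExponent <;> field_simp
      ring

lemma IsBHConstant.add {a b : ℕ} {K : ℝ} (ha : 1 ≤ a) (hb : 1 ≤ b) (hK : 0 ≤ K)
    (hA : IsBHConstant n a K) (hB : IsBHConstant n b K) : IsBHConstant n (a + b) (√3 * K) := by
  intro c s hs
  have ha' : (0 : ℝ) < a := by exact_mod_cast ha
  have hb' : (0 : ℝ) < b := by exact_mod_cast hb
  have hKs : 0 ≤ K * s := mul_nonneg hK (nonneg_of_abs_multilinearForm_le hs)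
  set C : (Fin a → Fin n) → (Fin b → Fin n) → ℝ := fun u v => c (Fin.append u v)
  have hW₁ : ∑ u, (∑ v, C u v ^ 2) ^ (bhExponent a / 2) ≤
      ((3 : ℝ) ^ b) ^ ((2 - bhExponent a) / 2) * (K * s) ^ bhExponent a :=
    sum_rpow_sum_sq_le C (bhExponent_pos ha') (bhExponent_lt_two ha') fun x₂ =>
      hA _ s fun x₁ => by rw [← multilinearForm_append]; exact hs _
  have hW₂ : ∑ v, (∑ u, C u v ^ 2) ^ (bhExponent b / 2) ≤
      ((3 : ℝ) ^ a) ^ ((2 - bhExponent b) / 2) * (K * s) ^ bhExponent b :=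
    sum_rpow_sum_sq_le (fun v u => C u v) (bhExponent_pos hb') (bhExponent_lt_two hb') fun x₁ =>
      hB _ s fun x₂ => by rw [← multilinearForm_append']; exact hs _
  calc ∑ i, |c i| ^ bhExponent ↑(a + b)
      = ∑ u, ∑ v, |C u v| ^ bhExponent (a + b) := by rw [sum_pi_fin_add, Nat.cast_add]
    _ ≤ (∑ u, (∑ v, C u v ^ 2) ^ (bhExponent a / 2)) ^ (((a : ℝ) + 1) / (a + b + 1)) *
        (∑ v, (∑ u, C u v ^ 2) ^ (bhExponent b / 2)) ^ (((b : ℝ) + 1) / (a + b + 1)) :=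
      sum_sum_abs_rpow_bhExponent_le C ha' hb'
    _ ≤ (((3 : ℝ) ^ b) ^ ((2 - bhExponent a) / 2) * (K * s) ^ bhExponent a) ^
          (((a : ℝ) + 1) / (a + b + 1)) *
        (((3 : ℝ) ^ a) ^ ((2 - bhExponent b) / 2) * (K * s) ^ bhExponent b) ^
          (((b : ℝ) + 1) / (a + b + 1)) := by gcongr
    _ = (√3 * K * s) ^ bhExponent ↑(a + b) := by
      rw [mul_assoc, Nat.cast_add, ← rpow_bhExponent_combine ha' hb' hKs, Real.rpow_natCast,
        Real.rpow_natCast]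

lemma isBHConstant_of_le_two_pow (t : ℕ) {m : ℕ} (hm : 1 ≤ m) (hmt : m ≤ 2 ^ t) :
    IsBHConstant n m (√3 ^ t) := by
  induction t generalizing m with
  | zero =>
    obtain rfl : m = 1 := by omega
    simpa using isBHConstant_one
  | succ t ih =>
    rcases le_or_gt m (2 ^ t) with h | h
    · exact (ih hm h).mono (by positivity) (pow_le_pow_right₀ (by norm_num) t.le_succ)
    · obtain ⟨r, rfl⟩ : ∃ r, m = 2 ^ t + r := ⟨m - 2 ^ t, by omega⟩
      rw [pow_succ']
      exact (ih Nat.one_le_two_pow le_rfl).add Nat.one_le_two_pow (by omega) (by positivity)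
        (ih (by omega) (by rw [pow_succ] at hmt; omega))

lemma three_pow_clog_le {k : ℕ} (hk : 1 ≤ k) : 3 ^ Nat.clog 2 k ≤ 3 * k ^ 2 := by
  rcases hk.eq_or_lt with rfl | hk
  · simp
  have hlt := Nat.pow_pred_clog_lt_self one_lt_two hk
  obtain ⟨t, ht⟩ : ∃ t, Nat.clog 2 k = t + 1 :=
    ⟨_, (Nat.succ_pred_eq_of_pos (Nat.clog_pos one_lt_two hk)).symm⟩
  rw [ht, Nat.pred_succ] at hlt
  rw [ht]
  calc 3 ^ (t + 1) = 3 * 3 ^ t := pow_succ' 3 t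
    _ ≤ 3 * 4 ^ t := by gcongr; norm_num
    _ = 3 * (2 ^ t) ^ 2 := by rw [← pow_mul, mul_comm t 2, pow_mul]; norm_num
    _ ≤ 3 * k ^ 2 := by gcongr

lemma pow_succ_mul_sq_le_sq {k : ℕ} (hk : 1 ≤ k) {K α : ℝ} (hK : IsBHConstant n k K)
    (hK₀ : 0 ≤ K) (hα : 0 ≤ α) {c : (Fin k → Fin n) → ℝ} (hc : ∀ i, |c i| = α)
    (h1 : ∀ x, |multilinearForm c x| ≤ 1) : (n : ℝ) ^ (k + 1) * α ^ 2 ≤ K ^ 2 := by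
  set ρ := bhExponent k
  have hρ : 0 < ρ := bhExponent_pos (by exact_mod_cast hk)
  have hsum : ∑ i, |c i| ^ ρ = (n : ℝ) ^ k * α ^ ρ := by simp [hc]
  have key := hK c 1 h1
  rw [hsum, mul_one] at key
  calc (n : ℝ) ^ (k + 1) * α ^ 2 = ((n : ℝ) ^ k * α ^ ρ) ^ (2 / ρ) := by
        rw [Real.mul_rpow (by positivity) (by positivity), ← Real.rpow_mul hα,
          mul_div_cancel₀ _ hρ.ne', Real.rpow_two, ← Real.rpow_natCast (n : ℝ) k,
          ← Real.rpow_mul (by positivity), ← Real.rpow_natCast (n : ℝ) (k + 1)]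
        congr 2
        simp only [ρ, bhExponent]
        field_simp
        push_cast
        ring
    _ ≤ (K ^ ρ) ^ (2 / ρ) := by gcongr
    _ = K ^ 2 := by rw [← Real.rpow_mul hK₀, mul_div_cancel₀ _ hρ.ne', Real.rpow_two]

lemma pow_succ_mul_sq_le_of_abs_eq {k : ℕ} (hk : 1 ≤ k) {α : ℝ} (hα : 0 ≤ α)
    {c : (Fin k → Fin n) → ℝ} (hc : ∀ i, |c i| = α) (h1 : ∀ x, |multilinearForm c x| ≤ 1) :
    (n : ℝ) ^ (k + 1) * α ^ 2 ≤ 3 * k ^ 2 := by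
  have hK := isBHConstant_of_le_two_pow (n := n) _ hk (Nat.le_pow_clog one_lt_two k)
  refine (pow_succ_mul_sq_le_sq hk hK (by positivity) hα hc h1).trans ?_
  rw [← pow_mul, mul_comm, pow_mul, Real.sq_sqrt (by norm_num)]
  exact_mod_cast three_pow_clog_le hk

end BohnenblustHille

/-- A special case of the Aaronson–Ambainis conjecture: there is a universal constant
`C > 0` such that for every bounded `k`-linear form
`f(x¹,…,xᵏ) = ∑ f̂_{i_1,…,i_k} x¹_{i_1} ⋯ xᵏ_{i_k}` with `‖f‖_∞ ≤ 1` over `{±1}ⁿ`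
inputs and all coefficients of the form `f̂_{i_1,…,i_k} = ±α` for a fixed `α ≥ 0`,
every variable `(j, ℓ)` satisfies `Var(f)² ≤ C k³ I_{(j,ℓ)}(f)`, where
`Var(f) = ∑ f̂_{i_1,…,i_k}²` and `I_{(j,ℓ)}(f) = ∑_{i : i_j = ℓ} f̂_{i_1,…,i_k}²`. -/
theorem aaronson_ambainis_special_case :
    ∃ C : ℝ, 0 < C ∧ ∀ k n : ℕ, ∀ α : ℝ, 0 ≤ α →
      ∀ c : (Fin k → Fin n) → ℝ,
      (∀ i, c i = α ∨ c i = -α) →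
      (∀ x : Fin k → Fin n → Bool,
        |∑ i : Fin k → Fin n, c i * ∏ j, (if x j (i j) then (1 : ℝ) else -1)| ≤ 1) →
      ∀ (j : Fin k) (ℓ : Fin n),
        (∑ i : Fin k → Fin n, (c i) ^ 2) ^ 2
          ≤ C * (k : ℝ) ^ 3 * ∑ i ∈ Finset.univ.filter fun i : Fin k → Fin n => i j = ℓ, (c i) ^ 2 := by
  refine ⟨3, by norm_num, fun k n α hα c hc hbound j ℓ => ?_⟩
  obtain ⟨k, rfl⟩ : ∃ k', k = k' + 1 := ⟨k - 1, by have := j.pos; omega⟩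
  have hsq (i : Fin (k + 1) → Fin n) : c i ^ 2 = α ^ 2 := by rcases hc i with h | h <;> simp [h]
  have habs (i : Fin (k + 1) → Fin n) : |c i| = α := by
    rcases hc i with h | h <;> simp [h, abs_of_nonneg hα]
  have hflat := BohnenblustHille.pow_succ_mul_sq_le_of_abs_eq k.succ_pos hα habs hbound
  have hcard : #{i : Fin (k + 1) → Fin n | i j = ℓ} = n ^ k := by
    simpa [Fintype.piFinset_univ] using
      Fintype.card_filter_piFinset_const_eq_of_mem (univ : Finset (Fin n)) j (mem_univ ℓ)
  simp only [hsq, Finset.sum_const, Finset.card_univ, Fintype.card_fun, Fintype.card_fin, hcard,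
    nsmul_eq_mul]
  push_cast at hflat ⊢
  calc ((n : ℝ) ^ (k + 1) * α ^ 2) ^ 2 = ((n : ℝ) ^ (k + 2) * α ^ 2) * ((n : ℝ) ^ k * α ^ 2) := by
        ring
    _ ≤ 3 * ((k : ℝ) + 1) ^ 2 * ((n : ℝ) ^ k * α ^ 2) := by gcongr
    _ ≤ 3 * ((k : ℝ) + 1) ^ 3 * ((n : ℝ) ^ k * α ^ 2) := by
        gcongr 3 * ?_ * _
        exact pow_le_pow_right₀ (by linarith [k.cast_nonneg (α := ℝ)]) (by norm_num)
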